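/- arXiv:2308.05715 — 5 statements merged into one kernel-verified Lean document; each statement's English description precedes it below -/
import Mathlib

section
/- Let 1 ≤ c₀ < c₁ < ⋯ < c_m = x be natural numbers such that for all j ∈ {0,…,m−1} the quotient c_{j+1}/c_j is an integer at least 2. Define d_n for integers n ≥ 2 by: d₂ = 1/2, d₃ = 0.8617, d₄ = 1.1463, d₅ = 0.8644, d₆ = 1.1512, d₇ = 1.0561, d₈ = 1.2991, d₉ = 1.1736, d₁₀ = 1.0492, d₁₁ = 1.1774, d₁₂ = 1.3781, d₁₃ = 0.9582, d₁₅ = 0.9533, d₁₆ = 1.1438, d₂₃ = 1.0123, d₂₄ = 1.1612, and d_n = 1 for all other n ≥ 2 (note: for n ∉ I the bound d_n ≤ 1 suffices here). Then ∏_{j=0}^{m−1} 2^{d_{c_{j+1}/c_j} · (x/c_j)} ≤ 2^{1.54 · x/c₀}. -/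
/-- The constants `d_n` from Definition `defineexponents` (with `d_n = 1` for
all `n` outside the exceptional index set `I`, which suffices here). -/
noncomputable def dExp (n : ℕ) : ℝ :=
  if n = 2 then 1/2
  else if n = 3 then 0.8617
  else if n = 4 then 1.1463
  else if n = 5 then 0.8644
  else if n = 6 then 1.1512
  else if n = 7 then 1.0561
  else if n = 8 then 1.2991
  else if n = 9 then 1.1736
  else if n = 10 then 1.0492
  else if n = 11 then 1.1774
  else if n = 12 then 1.3781
  else if n = 13 then 0.9582
  else if n = 15 then 0.9533
  else if n = 16 then 1.1438
  else if n = 23 then 1.0123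
  else if n = 24 then 1.1612
  else 1

lemma dExp_key (k : ℕ) (hk : 2 ≤ k) : dExp k + 1.54 / k ≤ 1.54 := by
  by_cases h : k ≤ 24
  · interval_cases k <;> norm_num [dExp]
  · have h25 : (25 : ℝ) ≤ k := by exact_mod_cast (by omega : 25 ≤ k)
    have hkpos : (0 : ℝ) < k := by linarith
    have hd : dExp k = 1 := by
      unfold dExp
      have : ¬ k = 2 := by omega
      simp only [if_neg (by omega : ¬ k = 2), if_neg (by omega : ¬ k = 3),
        if_neg (by omega : ¬ k = 4), if_neg (by omega : ¬ k = 5),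
        if_neg (by omega : ¬ k = 6), if_neg (by omega : ¬ k = 7),
        if_neg (by omega : ¬ k = 8), if_neg (by omega : ¬ k = 9),
        if_neg (by omega : ¬ k = 10), if_neg (by omega : ¬ k = 11),
        if_neg (by omega : ¬ k = 12), if_neg (by omega : ¬ k = 13),
        if_neg (by omega : ¬ k = 15), if_neg (by omega : ¬ k = 16),
        if_neg (by omega : ¬ k = 23), if_neg (by omega : ¬ k = 24)]
    have hdiv : 1.54 / (k : ℝ) ≤ 0.54 := by
      rw [div_le_iff₀ hkpos]; nlinarith
    rw [hd]; linarith

/-- Lemma `1.54bound`: if `1 ≤ c₀ < c₁ < ⋯ < c_m = x` are natural numbers such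
that each quotient `c_{j+1}/c_j` is an integer `≥ 2`, then
`∑_{j<m} d_{c_{j+1}/c_j} · (x/c_j) ≤ 1.54 · x/c₀`
(equivalently, `∏_{j<m} 2^{d_{c_{j+1}/c_j}·(x/c_j)} ≤ 2^{1.54·x/c₀}`). -/
theorem sum_dExp_le {m : ℕ} (c : ℕ → ℕ)
    (hc0 : 1 ≤ c 0)
    (hstep : ∀ j < m, ∃ k : ℕ, 2 ≤ k ∧ c (j + 1) = k * c j) :
    ∑ j ∈ Finset.range m, dExp (c (j + 1) / c j) * ((c m : ℝ) / (c j : ℝ)) ≤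
      1.54 * (c m : ℝ) / (c 0 : ℝ) := by
  induction m generalizing c with
  | zero =>
    simp only [Finset.range_zero, Finset.sum_empty]
    positivity
  | succ m ih =>
    obtain ⟨k, hk2, hck⟩ := hstep 0 (by omega)
    have hc1 : 1 ≤ c 1 := by
      calc 1 ≤ c 0 := hc0
        _ ≤ k * c 0 := Nat.le_mul_of_pos_left _ (by omega)
        _ = c 1 := hck.symm
    have ih' := ih (fun j => c (j + 1)) hc1 (fun j hj => hstep (j + 1) (by omega))
    rw [Finset.sum_range_succ']
    have hd : dExp (c 1 / c 0) = dExp k := by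
      rw [hck, Nat.mul_div_cancel _ (by omega : 0 < c 0)]
    rw [hd]
    have hc0R : (1 : ℝ) ≤ (c 0 : ℝ) := by exact_mod_cast hc0
    have hc0pos : (0 : ℝ) < (c 0 : ℝ) := by linarith
    have hkR : (2 : ℝ) ≤ (k : ℝ) := by exact_mod_cast hk2
    have hkpos : (0 : ℝ) < (k : ℝ) := by linarith
    have hxpos : (0 : ℝ) ≤ (c (m + 1) : ℝ) := by positivity
    have hc1R : (c 1 : ℝ) = k * c 0 := by exact_mod_cast hck
    have key := dExp_key k hk2
    have h1 : 1.54 * (c (m + 1) : ℝ) / (c 1 : ℝ)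
        = (1.54 / k) * ((c (m + 1) : ℝ) / (c 0 : ℝ)) := by
      rw [hc1R]; field_simp
    have h2 := mul_le_mul_of_nonneg_right key (div_nonneg hxpos hc0pos.le)
    calc ∑ j ∈ Finset.range m,
          dExp (c (j + 1 + 1) / c (j + 1)) * ((c (m + 1) : ℝ) / (c (j + 1) : ℝ))
          + dExp k * ((c (m + 1) : ℝ) / (c 0 : ℝ))
        ≤ 1.54 * (c (m + 1) : ℝ) / (c 1 : ℝ)
          + dExp k * ((c (m + 1) : ℝ) / (c 0 : ℝ)) := by linarith [ih']
      _ = (dExp k + 1.54 / k) * ((c (m + 1) : ℝ) / (c 0 : ℝ)) := by rw [h1]; ring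
      _ ≤ 1.54 * ((c (m + 1) : ℝ) / (c 0 : ℝ)) := h2
      _ = 1.54 * (c (m + 1) : ℝ) / (c 0 : ℝ) := by ring
end

section
/- Let P be a finite ordered set, G a group of automorphisms of P, D and E two G-orbits, S a block of the action of G on D, and C a block of the action of G on E. For S' in the block system of S, define the home block H(S') as the set of all S'' in the block system of S such that for every conjugate block C' of C, the weaving type of (S'', C') equals the weaving type of (S', C'). Then H(S') is a block for the action of G on the block system of S. -/
open Pointwise

variable {P : Type*} [PartialOrder P]

/-- Two elements are comparable. -/
def Cmp (a b : P) : Prop := a ≤ b ∨ b ≤ a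

/-- `A` is made by `B`: every element of `A` is strictly below every element of
`B`, or strictly above every element of `B` (`A ◇ B`). -/
def MadeBy (A B : Set P) : Prop :=
  (∀ a ∈ A, ∀ b ∈ B, a < b) ∨ (∀ a ∈ A, ∀ b ∈ B, b < a)

/-- `A` is incomparable to `B`: no element of `A` is comparable to any element
of `B` (`A ∥ B`). -/
def Incomp (A B : Set P) : Prop := ∀ a ∈ A, ∀ b ∈ B, ¬ Cmp a b

/-- `A` and `B` are nontrivially woven: some pair of elements is comparable and
some pair is incomparable. -/
def Woven (A B : Set P) : Prop :=
  (∃ a ∈ A, ∃ b ∈ B, Cmp a b) ∧ (∃ a ∈ A, ∃ b ∈ B, ¬ Cmp a b)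

/-- The pairs `(S₁, C')` and `(S₂, C')` have the same weaving type relative to
the group `G`: the trivial types (made / incomparable) agree, and in the
nontrivially woven case the pairs are `G`-conjugate. -/
def SameWeave (G : Subgroup (Equiv.Perm P)) (S₁ S₂ C' : Set P) : Prop :=
  (MadeBy S₁ C' ↔ MadeBy S₂ C') ∧
  (Incomp S₁ C' ↔ Incomp S₂ C') ∧
  (Woven S₁ C' → ∃ Φ ∈ G, Φ • S₁ = S₂ ∧ Φ • C' = C') ∧
  (Woven S₂ C' → ∃ Φ ∈ G, Φ • S₂ = S₁ ∧ Φ • C' = C')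

/-- The home block of `S'` relative to the block system of `C`: all conjugates
`S''` of `S` whose canonical partition of the conjugates of `C` coincides with
that of `S'`. -/
def homeBlock (G : Subgroup (Equiv.Perm P)) (S C S' : Set P) : Set (Set P) :=
  {S'' | (∃ σ ∈ G, σ • S = S'') ∧
    ∀ C' : Set P, (∃ σ ∈ G, σ • C = C') → SameWeave G S'' S' C'}


section Aux

variable (G : Subgroup (Equiv.Perm P))

lemma hb_le_iff (hmono : ∀ σ ∈ G, ∀ a b : P, a ≤ b → σ a ≤ σ b)
    {σ : Equiv.Perm P} (hσ : σ ∈ G) (a b : P) : σ a ≤ σ b ↔ a ≤ b := by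
  refine ⟨fun h => ?_, fun h => hmono σ hσ a b h⟩
  have := hmono σ⁻¹ (inv_mem hσ) _ _ h
  simpa using this

lemma hb_lt_iff (hmono : ∀ σ ∈ G, ∀ a b : P, a ≤ b → σ a ≤ σ b)
    {σ : Equiv.Perm P} (hσ : σ ∈ G) (a b : P) : σ a < σ b ↔ a < b := by
  simp [lt_iff_le_not_ge, hb_le_iff G hmono hσ]

lemma hb_cmp_iff (hmono : ∀ σ ∈ G, ∀ a b : P, a ≤ b → σ a ≤ σ b)
    {σ : Equiv.Perm P} (hσ : σ ∈ G) (a b : P) : Cmp (σ a) (σ b) ↔ Cmp a b := by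
  simp [Cmp, hb_le_iff G hmono hσ]

lemma hb_madeBy_smul (hmono : ∀ σ ∈ G, ∀ a b : P, a ≤ b → σ a ≤ σ b)
    {σ : Equiv.Perm P} (hσ : σ ∈ G) (A B : Set P) :
    MadeBy (σ • A) (σ • B) ↔ MadeBy A B := by
  have fwd : ∀ τ ∈ G, ∀ A B : Set P, MadeBy A B → MadeBy (τ • A) (τ • B) := by
    intro τ hτ A B hAB
    rcases hAB with h | h
    · left
      rintro a ha b hb
      rw [Set.mem_smul_set] at ha hb
      obtain ⟨a₀, ha₀, rfl⟩ := ha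
      obtain ⟨b₀, hb₀, rfl⟩ := hb
      simpa only [Equiv.Perm.smul_def] using
        (hb_lt_iff G hmono hτ a₀ b₀).mpr (h a₀ ha₀ b₀ hb₀)
    · right
      rintro a ha b hb
      rw [Set.mem_smul_set] at ha hb
      obtain ⟨a₀, ha₀, rfl⟩ := ha
      obtain ⟨b₀, hb₀, rfl⟩ := hb
      simpa only [Equiv.Perm.smul_def] using
        (hb_lt_iff G hmono hτ b₀ a₀).mpr (h a₀ ha₀ b₀ hb₀)
  refine ⟨fun h => ?_, fun h => fwd σ hσ A B h⟩
  have := fwd σ⁻¹ (inv_mem hσ) _ _ h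
  simpa [inv_smul_smul] using this

lemma hb_incomp_smul (hmono : ∀ σ ∈ G, ∀ a b : P, a ≤ b → σ a ≤ σ b)
    {σ : Equiv.Perm P} (hσ : σ ∈ G) (A B : Set P) :
    Incomp (σ • A) (σ • B) ↔ Incomp A B := by
  have fwd : ∀ τ ∈ G, ∀ A B : Set P, Incomp A B → Incomp (τ • A) (τ • B) := by
    intro τ hτ A B h a ha b hb
    rw [Set.mem_smul_set] at ha hb
    obtain ⟨a₀, ha₀, rfl⟩ := ha
    obtain ⟨b₀, hb₀, rfl⟩ := hb
    simpa only [Equiv.Perm.smul_def, hb_cmp_iff G hmono hτ] using h a₀ ha₀ b₀ hb₀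
  refine ⟨fun h => ?_, fun h => fwd σ hσ A B h⟩
  have := fwd σ⁻¹ (inv_mem hσ) _ _ h
  simpa [inv_smul_smul] using this

lemma hb_woven_smul (hmono : ∀ σ ∈ G, ∀ a b : P, a ≤ b → σ a ≤ σ b)
    {σ : Equiv.Perm P} (hσ : σ ∈ G) (A B : Set P) :
    Woven (σ • A) (σ • B) ↔ Woven A B := by
  have fwd : ∀ τ ∈ G, ∀ A B : Set P, Woven A B → Woven (τ • A) (τ • B) := by
    rintro τ hτ A B ⟨⟨a, ha, b, hb, hab⟩, ⟨a', ha', b', hb', hab'⟩⟩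
    constructor
    · exact ⟨τ • a, Set.smul_mem_smul_set ha, τ • b, Set.smul_mem_smul_set hb,
        by simpa only [Equiv.Perm.smul_def, hb_cmp_iff G hmono hτ] using hab⟩
    · exact ⟨τ • a', Set.smul_mem_smul_set ha', τ • b', Set.smul_mem_smul_set hb',
        by simpa only [Equiv.Perm.smul_def, hb_cmp_iff G hmono hτ] using hab'⟩
  refine ⟨fun h => ?_, fun h => fwd σ hσ A B h⟩
  have := fwd σ⁻¹ (inv_mem hσ) _ _ h
  simpa [inv_smul_smul] using this

lemma hb_sameWeave_smul (hmono : ∀ σ ∈ G, ∀ a b : P, a ≤ b → σ a ≤ σ b)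
    {σ : Equiv.Perm P} (hσ : σ ∈ G) (S₁ S₂ C' : Set P)
    (h : SameWeave G S₁ S₂ C') :
    SameWeave G (σ • S₁) (σ • S₂) (σ • C') := by
  obtain ⟨h1, h2, h3, h4⟩ := h
  refine ⟨?_, ?_, ?_, ?_⟩
  · rw [hb_madeBy_smul G hmono hσ, hb_madeBy_smul G hmono hσ]; exact h1
  · rw [hb_incomp_smul G hmono hσ, hb_incomp_smul G hmono hσ]; exact h2
  · intro hw
    rw [hb_woven_smul G hmono hσ] at hw
    obtain ⟨Ψ, hΨ, hS, hC⟩ := h3 hw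
    refine ⟨σ * Ψ * σ⁻¹, mul_mem (mul_mem hσ hΨ) (inv_mem hσ), ?_, ?_⟩
    · rw [smul_smul, inv_mul_cancel_right, mul_smul, hS]
    · rw [smul_smul, inv_mul_cancel_right, mul_smul, hC]
  · intro hw
    rw [hb_woven_smul G hmono hσ] at hw
    obtain ⟨Ψ, hΨ, hS, hC⟩ := h4 hw
    refine ⟨σ * Ψ * σ⁻¹, mul_mem (mul_mem hσ hΨ) (inv_mem hσ), ?_, ?_⟩
    · rw [smul_smul, inv_mul_cancel_right, mul_smul, hS]
    · rw [smul_smul, inv_mul_cancel_right, mul_smul, hC]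

lemma hb_sameWeave_symm {S₁ S₂ C' : Set P} (h : SameWeave G S₁ S₂ C') :
    SameWeave G S₂ S₁ C' :=
  ⟨h.1.symm, h.2.1.symm, h.2.2.2, h.2.2.1⟩

lemma hb_sameWeave_trans (hmono : ∀ σ ∈ G, ∀ a b : P, a ≤ b → σ a ≤ σ b)
    {S₁ S₂ S₃ C' : Set P} (h12 : SameWeave G S₁ S₂ C')
    (h23 : SameWeave G S₂ S₃ C') : SameWeave G S₁ S₃ C' := by
  refine ⟨h12.1.trans h23.1, h12.2.1.trans h23.2.1, ?_, ?_⟩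
  · intro hw
    obtain ⟨Ψ₁, hΨ₁, hS₁, hC₁⟩ := h12.2.2.1 hw
    have hw₂ : Woven S₂ C' := by
      rw [← hS₁, ← hC₁]; exact (hb_woven_smul G hmono hΨ₁ _ _).mpr hw
    obtain ⟨Ψ₂, hΨ₂, hS₂, hC₂⟩ := h23.2.2.1 hw₂
    exact ⟨Ψ₂ * Ψ₁, mul_mem hΨ₂ hΨ₁, by rw [mul_smul, hS₁, hS₂],
      by rw [mul_smul, hC₁, hC₂]⟩
  · intro hw
    obtain ⟨Ψ₂, hΨ₂, hS₂, hC₂⟩ := h23.2.2.2 hw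
    have hw₂ : Woven S₂ C' := by
      rw [← hS₂, ← hC₂]; exact (hb_woven_smul G hmono hΨ₂ _ _).mpr hw
    obtain ⟨Ψ₁, hΨ₁, hS₁, hC₁⟩ := h12.2.2.2 hw₂
    exact ⟨Ψ₁ * Ψ₂, mul_mem hΨ₁ hΨ₂, by rw [mul_smul, hS₂, hS₁],
      by rw [mul_smul, hC₂, hC₁]⟩

end Aux

/-- Lemma `homeblocklem`: for a group `G` of automorphisms of a finite ordered
set `P`, orbits `D`, `E`, a block `S` of the action on `D` and a block `C` of
the action on `E`, the home block `H(S')` of any conjugate `S'` of `S` is a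
block for the action of `G` on the block system of `S`. -/
theorem homeBlock_is_block [Fintype P]
    (G : Subgroup (Equiv.Perm P))
    (hmono : ∀ σ ∈ G, ∀ a b : P, a ≤ b → σ a ≤ σ b)
    (d e : P)
    (D : Set P) (hD : D = {y | ∃ σ ∈ G, σ d = y})
    (E : Set P) (hE : E = {y | ∃ σ ∈ G, σ e = y})
    (S : Set P) (hSD : S ⊆ D)
    (hblockS : ∀ σ ∈ G, σ • S = S ∨ (σ • S) ∩ S = ∅)
    (C : Set P) (hCE : C ⊆ E)
    (hblockC : ∀ σ ∈ G, σ • C = C ∨ (σ • C) ∩ C = ∅)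
    (S' : Set P) (hS' : ∃ σ ∈ G, σ • S = S') :
    ∀ Φ ∈ G,
      (fun T => Φ • T) '' homeBlock G S C S' = homeBlock G S C S' ∨
      ((fun T => Φ • T) '' homeBlock G S C S') ∩ homeBlock G S C S' = ∅ := by
  intro Φ hΦ
  by_cases hne : ((fun T => Φ • T) '' homeBlock G S C S') ∩ homeBlock G S C S' = ∅
  · exact Or.inr hne
  left
  obtain ⟨U, hUim, hUH⟩ := Set.nonempty_iff_ne_empty.mpr hne
  obtain ⟨T₀, hT₀, rfl⟩ := hUim
  have conjC : ∀ τ : Equiv.Perm P, τ ∈ G → ∀ C' : Set P,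
      (∃ σ ∈ G, σ • C = C') → (∃ σ ∈ G, σ • C = τ • C') := by
    rintro τ hτ C' ⟨σ, hσ, rfl⟩
    exact ⟨τ * σ, mul_mem hτ hσ, mul_smul τ σ C⟩
  have key : ∀ C' : Set P, (∃ σ ∈ G, σ • C = C') → SameWeave G (Φ • S') S' C' := by
    intro C' hC'
    have h1 : SameWeave G T₀ S' (Φ⁻¹ • C') :=
      hT₀.2 _ (conjC Φ⁻¹ (inv_mem hΦ) C' hC')
    have h2 := hb_sameWeave_smul G hmono hΦ _ _ _ h1
    rw [smul_inv_smul] at h2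
    exact hb_sameWeave_trans G hmono (hb_sameWeave_symm G h2) (hUH.2 C' hC')
  have keyInv : ∀ C' : Set P, (∃ σ ∈ G, σ • C = C') → SameWeave G (Φ⁻¹ • S') S' C' := by
    intro C' hC'
    have h1 : SameWeave G (Φ • S') S' (Φ • C') := key _ (conjC Φ hΦ C' hC')
    have h2 := hb_sameWeave_smul G hmono (inv_mem hΦ) _ _ _ h1
    rw [inv_smul_smul, inv_smul_smul] at h2
    exact hb_sameWeave_symm G h2
  ext U
  constructor
  · rintro ⟨V, hV, rfl⟩
    refine ⟨?_, ?_⟩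
    · obtain ⟨σ, hσ, hσS⟩ := hV.1
      exact ⟨Φ * σ, mul_mem hΦ hσ, by simp only [mul_smul, hσS]⟩
    · intro C' hC'
      have h1 : SameWeave G V S' (Φ⁻¹ • C') :=
        hV.2 _ (conjC Φ⁻¹ (inv_mem hΦ) C' hC')
      have h2 := hb_sameWeave_smul G hmono hΦ _ _ _ h1
      rw [smul_inv_smul] at h2
      exact hb_sameWeave_trans G hmono h2 (key C' hC')
  · intro hU
    refine ⟨Φ⁻¹ • U, ⟨?_, ?_⟩, smul_inv_smul Φ U⟩
    · obtain ⟨σ, hσ, hσS⟩ := hU.1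
      exact ⟨Φ⁻¹ * σ, mul_mem (inv_mem hΦ) hσ, by simp only [mul_smul, hσS]⟩
    · intro C' hC'
      have h1 : SameWeave G U S' (Φ • C') := hU.2 _ (conjC Φ hΦ C' hC')
      have h2 := hb_sameWeave_smul G hmono (inv_mem hΦ) _ _ _ h1
      rw [inv_smul_smul] at h2
      exact hb_sameWeave_trans G hmono h2 (keyInv C' hC')
end

section
/- Let P be a finite ordered set, G ≤ Aut(P), D, E two G-orbits, (S,B) a primitive pair for the action of G on D, and C a block of the action of G on E such that the C-canonical partition of the blocks of G·S contained in B has more than one nonempty part. Then for all Φ, Ψ ∈ G: if Φ and Ψ induce the same permutation of the conjugates of C and the same permutation of the conjugates of B, then they induce the same permutation of the conjugates of S. -/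
open Pointwise

variable {P : Type*} [PartialOrder P]

/-- The conjugates of `S` contained in `B`, i.e. `B[Λ*(D)·S]`. -/
def blocksIn (G : Subgroup (Equiv.Perm P)) (S B : Set P) : Set (Set P) :=
  {S' | (∃ σ ∈ G, σ • S = S') ∧ S' ⊆ B}

/-- `(S, B)` is a primitive pair: the group induced on `B[G·S]` by the setwise
stabilizer of `B` is transitive and admits no nontrivial blocks. -/
def PrimitivePair (G : Subgroup (Equiv.Perm P)) (S B : Set P) : Prop :=
  S ⊆ B ∧ S ≠ B ∧
  (∀ S₁ ∈ blocksIn G S B, ∀ S₂ ∈ blocksIn G S B,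
    ∃ σ ∈ G, σ • B = B ∧ σ • S₁ = S₂) ∧
  (∀ Q ⊆ blocksIn G S B,
    (∀ σ ∈ G, σ • B = B →
      (fun T => σ • T) '' Q = Q ∨ ((fun T => σ • T) '' Q) ∩ Q = ∅) →
    Q.Subsingleton ∨ Q = blocksIn G S B)

/-- `C ▶^B S`: the canonical `C`-partition of `B[G·S]` has more than one
nonempty part. -/
def ControlsVia (G : Subgroup (Equiv.Perm P)) (C B S : Set P) : Prop :=
  ∃ S₁ ∈ blocksIn G S B, ∃ S₂ ∈ blocksIn G S B, ¬ SameWeave G S₁ S₂ C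

/-! The elements of `G` fixing every conjugate of `B` and of `C` form a normal subgroup `K` of `G`
(an intersection of normal cores of stabilizers), and `Ψ⁻¹ Φ ∈ K`. Orbits of a normal subgroup are
blocks, so by primitivity the `K`-orbit of `S` is either `{S}` or all of `B[G·S]`. In the latter case
any two members of `B[G·S]` are related by an automorphism fixing `C`, hence weave with `C` in the
same way, which contradicts `C ▶^B S`. Thus `K` fixes `S` and, being normal, every conjugate of `S`.
-/

open MulAction

section NormalCore

variable {M α : Type*} [Group M] [MulAction M α]

theorem inv_mul_mem_normalCore_stabilizer_iff {g h : M} {a : α} :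
    h⁻¹ * g ∈ (stabilizer M a).normalCore ↔ ∀ b : M, g • b • a = h • b • a := by
  have conj_mem : ∀ b : M, b * (h⁻¹ * g) * b⁻¹ ∈ stabilizer M a ↔ g • b⁻¹ • a = h • b⁻¹ • a := by
    intro b
    rw [mem_stabilizer_iff, mul_smul, mul_smul, smul_eq_iff_eq_inv_smul, mul_smul, inv_smul_eq_iff]
  change (∀ b : M, _) ↔ _
  simp_rw [conj_mem]
  exact ⟨fun H b => by simpa using H b⁻¹, fun H b => H b⁻¹⟩

end NormalCore

section OrderAutomorphism

variable {σ : Equiv.Perm P} (hσ : ∀ a b : P, σ a ≤ σ b ↔ a ≤ b)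
include hσ

theorem madeBy_smul_iff {A C : Set P} : MadeBy (σ • A) (σ • C) ↔ MadeBy A C := by
  have hlt : ∀ a b : P, σ a < σ b ↔ a < b := fun a b => by simp only [lt_iff_le_not_ge, hσ]
  simp only [MadeBy, ← Set.image_smul, Set.forall_mem_image, Equiv.Perm.smul_def, hlt]

theorem incomp_smul_iff {A C : Set P} : Incomp (σ • A) (σ • C) ↔ Incomp A C := by
  simp only [Incomp, Cmp, ← Set.image_smul, Set.forall_mem_image, Equiv.Perm.smul_def, hσ]

end OrderAutomorphism

theorem apply_le_apply_iff_of_mem {G : Subgroup (Equiv.Perm P)}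
    (hmono : ∀ σ ∈ G, ∀ a b : P, a ≤ b → σ a ≤ σ b) {σ : Equiv.Perm P} (hσ : σ ∈ G) (a b : P) :
    σ a ≤ σ b ↔ a ≤ b :=
  ⟨fun h => by simpa using hmono σ⁻¹ (G.inv_mem hσ) _ _ h, hmono σ hσ a b⟩

theorem sameWeave_smul_of_smul_eq {G : Subgroup (Equiv.Perm P)}
    (hmono : ∀ σ ∈ G, ∀ a b : P, a ≤ b → σ a ≤ σ b) {θ : Equiv.Perm P} (hθ : θ ∈ G)
    {C : Set P} (hθC : θ • C = C) (T : Set P) : SameWeave G T (θ • T) C := by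
  have hθ_le := apply_le_apply_iff_of_mem hmono hθ
  refine ⟨?_, ?_, fun _ => ⟨θ, hθ, rfl, hθC⟩,
    fun _ => ⟨θ⁻¹, G.inv_mem hθ, inv_smul_smul θ T, inv_smul_eq_iff.2 hθC.symm⟩⟩
  · rw [← madeBy_smul_iff hθ_le (A := T), hθC]
  · rw [← incomp_smul_iff hθ_le (A := T), hθC]

omit [PartialOrder P] in
theorem PrimitivePair.orbit_subsingleton_or_eq_blocksIn {G : Subgroup (Equiv.Perm P)}
    {S B : Set P} (hprim : PrimitivePair G S B) {N : Subgroup G} [N.Normal]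
    (hNB : N ≤ stabilizer G B) :
    (orbit N S).Subsingleton ∨ orbit N S = blocksIn G S B := by
  refine hprim.2.2.2 _ ?_ fun σ hσ _ => ?_
  · rintro _ ⟨n, rfl⟩
    refine ⟨⟨n, (n : G).2, rfl⟩, ?_⟩
    calc n • S ⊆ n • B := Set.smul_set_mono hprim.1
      _ = B := hNB n.2
  · rw [← Set.disjoint_iff_inter_eq_empty]
    exact (IsBlock.orbit_of_normal S).smul_eq_or_disjoint (⟨σ, hσ⟩ : G)

theorem ControlsVia.le_stabilizer {G : Subgroup (Equiv.Perm P)}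
    (hmono : ∀ σ ∈ G, ∀ a b : P, a ≤ b → σ a ≤ σ b) {C B S : Set P}
    (hcontrol : ControlsVia G C B S) (hprim : PrimitivePair G S B) {N : Subgroup G} [N.Normal]
    (hNB : N ≤ stabilizer G B) (hNC : N ≤ stabilizer G C) : N ≤ stabilizer G S := by
  rcases hprim.orbit_subsingleton_or_eq_blocksIn hNB with hsub | hall
  · exact fun n hn => hsub (mem_orbit S (⟨n, hn⟩ : N)) (mem_orbit_self S)
  · obtain ⟨T₁, hT₁, T₂, hT₂, hweave⟩ := hcontrol
    rw [← hall] at hT₁ hT₂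
    rw [← orbit_eq_iff.2 hT₁] at hT₂
    obtain ⟨n, rfl⟩ := hT₂
    exact (hweave (sameWeave_smul_of_smul_eq hmono (n : G).2 (hNC n.2) T₁)).elim

theorem control_determines_action_general
    (G : Subgroup (Equiv.Perm P))
    (hmono : ∀ σ ∈ G, ∀ a b : P, a ≤ b → σ a ≤ σ b)
    (S B : Set P)
    (hprim : PrimitivePair G S B)
    (C : Set P)
    (hcontrol : ControlsVia G C B S) :
    ∀ Φ ∈ G, ∀ Ψ ∈ G,
      (∀ C' : Set P, (∃ σ ∈ G, σ • C = C') → Φ • C' = Ψ • C') →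
      (∀ B' : Set P, (∃ σ ∈ G, σ • B = B') → Φ • B' = Ψ • B') →
      (∀ S' : Set P, (∃ σ ∈ G, σ • S = S') → Φ • S' = Ψ • S') := by
  rintro Φ hΦ Ψ hΨ hC hB _ ⟨σ, hσ, rfl⟩
  let K : Subgroup G := (stabilizer G B).normalCore ⊓ (stabilizer G C).normalCore
  have hKS : K ≤ (stabilizer G S).normalCore :=
    Subgroup.normal_le_normalCore.2 <| hcontrol.le_stabilizer hmono hprim
      (inf_le_left.trans (Subgroup.normalCore_le _)) (inf_le_right.trans (Subgroup.normalCore_le _))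
  have hΨΦ : (⟨Ψ, hΨ⟩ : G)⁻¹ * ⟨Φ, hΦ⟩ ∈ K :=
    ⟨inv_mul_mem_normalCore_stabilizer_iff.2 fun b => hB _ ⟨b, b.2, rfl⟩,
      inv_mul_mem_normalCore_stabilizer_iff.2 fun b => hC _ ⟨b, b.2, rfl⟩⟩
  exact inv_mul_mem_normalCore_stabilizer_iff.1 (hKS hΨΦ) ⟨σ, hσ⟩

/-- Lemma `controllemma`: if `C ▶^B S`, then any two automorphisms in `G`
inducing the same permutation on the conjugates of `C` and the same
permutation on the conjugates of `B` induce the same permutation on the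
conjugates of `S`. -/
theorem control_determines_action [Fintype P]
    (G : Subgroup (Equiv.Perm P))
    (hmono : ∀ σ ∈ G, ∀ a b : P, a ≤ b → σ a ≤ σ b)
    (d e : P)
    (D : Set P) (hD : D = {y | ∃ σ ∈ G, σ d = y})
    (E : Set P) (hE : E = {y | ∃ σ ∈ G, σ e = y})
    (S B : Set P) (hSB : S ⊆ B) (hBD : B ⊆ D)
    (hblockS : ∀ σ ∈ G, σ • S = S ∨ (σ • S) ∩ S = ∅)
    (hblockB : ∀ σ ∈ G, σ • B = B ∨ (σ • B) ∩ B = ∅)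
    (hprim : PrimitivePair G S B)
    (C : Set P) (hCE : C ⊆ E)
    (hblockC : ∀ σ ∈ G, σ • C = C ∨ (σ • C) ∩ C = ∅)
    (hcontrol : ControlsVia G C B S) :
    ∀ Φ ∈ G, ∀ Ψ ∈ G,
      (∀ C' : Set P, (∃ σ ∈ G, σ • C = C') → Φ • C' = Ψ • C') →
      (∀ B' : Set P, (∃ σ ∈ G, σ • B = B') → Φ • B' = Ψ • B') →
      (∀ S' : Set P, (∃ σ ∈ G, σ • S = S') → Φ • S' = Ψ • S') :=
  control_determines_action_general G hmono S B hprim C hcontrol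
end

section
/- Let P be a finite ordered set, G ≤ Aut(P), D, E two G-orbits, (S,B) a primitive pair for the action on D, C a block of the action on E with C ▶^B S, and T a block of the action on E such that (C,T) is a primitive pair. Then T ▶^B S or S ▶^T C. -/
open Pointwise

variable {P : Type*} [PartialOrder P]

/-! If neither `T ▶^B S` nor `S ▶^T C`, every conjugate `Y` of `S` in `B` has the weaving type
of `S` relative to `C`, contradicting `C ▶^B S`. If `S` and `T` are woven, `T ▶^B S` failing gives
an element of `G` fixing `T` and carrying `S` to `Y`; it carries `C` to a conjugate `C'` inside `T`,
and `S ▶^T C` failing says that `(S, C)` and `(S, C')` have the same type. Otherwise `(X, C)` has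
the type of `(X, T)` for `X = S, Y`: every point of `T` is moved into `C` by `G`, and an order
automorphism of a finite order moves no point strictly up or down, so a set below (above) `C`
that is comparable to all of `T` is below (above) `T`. -/

section Weaving

variable {Q : Type*} [PartialOrder Q] {A B C T X : Set P}

lemma cmp_comm {a b : P} : Cmp a b ↔ Cmp b a := Or.comm

lemma cmp_map_iff (f : P ≃o Q) {a b : P} : Cmp (f a) (f b) ↔ Cmp a b := by
  simp only [Cmp, f.le_iff_le]

lemma madeBy_comm : MadeBy A B ↔ MadeBy B A := by
  unfold MadeBy
  exact ⟨fun h => h.symm.imp (fun h b hb a ha => h a ha b hb) (fun h b hb a ha => h a ha b hb),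
    fun h => h.symm.imp (fun h a ha b hb => h b hb a ha) (fun h a ha b hb => h b hb a ha)⟩

lemma incomp_comm : Incomp A B ↔ Incomp B A :=
  ⟨fun h b hb a ha hc => h a ha b hb (cmp_comm.1 hc),
    fun h a ha b hb hc => h b hb a ha (cmp_comm.1 hc)⟩

lemma woven_comm : Woven A B ↔ Woven B A := by
  simp only [Woven]
  constructor <;>
  · rintro ⟨⟨a, ha, b, hb, hab⟩, ⟨a', ha', b', hb', hab'⟩⟩
    exact ⟨⟨b, hb, a, ha, cmp_comm.1 hab⟩, ⟨b', hb', a', ha', mt cmp_comm.1 hab'⟩⟩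

lemma madeBy_image_iff (f : P ≃o Q) : MadeBy (f '' A) (f '' B) ↔ MadeBy A B := by
  simp only [MadeBy, Set.forall_mem_image, f.lt_iff_lt]

lemma incomp_image_iff (f : P ≃o Q) : Incomp (f '' A) (f '' B) ↔ Incomp A B := by
  simp only [Incomp, Set.forall_mem_image, cmp_map_iff]

lemma woven_image_iff (f : P ≃o Q) : Woven (f '' A) (f '' B) ↔ Woven A B := by
  simp only [Woven, Set.exists_mem_image, cmp_map_iff]

lemma MadeBy.cmp (h : MadeBy A B) {a b : P} (ha : a ∈ A) (hb : b ∈ B) : Cmp a b :=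
  h.elim (fun h => Or.inl (h a ha b hb).le) (fun h => Or.inr (h a ha b hb).le)

lemma MadeBy.mono_right (h : MadeBy A T) (hCT : C ⊆ T) : MadeBy A C :=
  h.imp (fun h a ha c hc => h a ha c (hCT hc)) (fun h a ha c hc => h a ha c (hCT hc))

lemma Incomp.mono_right (h : Incomp A T) (hCT : C ⊆ T) : Incomp A C :=
  fun a ha c hc => h a ha c (hCT hc)

lemma Woven.mono_right (h : Woven A C) (hCT : C ⊆ T) : Woven A T := by
  obtain ⟨⟨a, ha, c, hc, hac⟩, ⟨a', ha', c', hc', hac'⟩⟩ := h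
  exact ⟨⟨a, ha, c, hCT hc, hac⟩, ⟨a', ha', c', hCT hc', hac'⟩⟩

lemma incomp_or_forall_cmp_of_not_woven (h : ¬ Woven A B) :
    Incomp A B ∨ ∀ a ∈ A, ∀ b ∈ B, Cmp a b := by
  rw [Woven, not_and_or] at h
  exact h.imp (fun h a ha b hb hab => h ⟨a, ha, b, hb, hab⟩)
    (fun h a ha b hb => by_contra fun hab => h ⟨a, ha, b, hb, hab⟩)

end Weaving

/-- `WeaveEquiv G A B A' B'`: the pairs `(A, B)` and `(A', B')` have the same weaving type, so
that `SameWeave G S₁ S₂ C` is `WeaveEquiv G S₁ C S₂ C`. -/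
def WeaveEquiv (G : Subgroup (Equiv.Perm P)) (A B A' B' : Set P) : Prop :=
  (MadeBy A B ↔ MadeBy A' B') ∧
  (Incomp A B ↔ Incomp A' B') ∧
  (Woven A B → ∃ Φ ∈ G, Φ • A = A' ∧ Φ • B = B') ∧
  (Woven A' B' → ∃ Φ ∈ G, Φ • A' = A ∧ Φ • B' = B)

section Finite

variable [Finite P]

lemma OrderIso.not_lt_apply_self (f : P ≃o P) (x : P) : ¬ x < f x := by
  intro hx
  have hmono : StrictMono fun n : ℕ => (f^[n]) x :=
    strictMono_nat_of_lt_succ fun n => by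
      simpa only [Function.iterate_succ_apply] using f.strictMono.iterate n hx
  exact not_injective_infinite_finite _ hmono.injective

lemma OrderIso.not_apply_lt_self (f : P ≃o P) (x : P) : ¬ f x < x := by
  simpa using f.symm.not_lt_apply_self (f x)

lemma madeBy_of_forall_cmp (hconj : ∀ t ∈ T, ∃ f : P ≃o P, f t ∈ C)
    (hcmp : ∀ x ∈ X, ∀ t ∈ T, Cmp x t) (h : MadeBy X C) : MadeBy X T := by
  rcases h with hlt | hlt
  · refine Or.inl fun x hx t ht => ?_
    obtain ⟨f, hf⟩ := hconj t ht
    have hnle : ¬ t ≤ x := fun hle => f.not_lt_apply_self t (hle.trans_lt (hlt x hx _ hf))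
    exact lt_of_le_not_ge ((hcmp x hx t ht).resolve_right hnle) hnle
  · refine Or.inr fun x hx t ht => ?_
    obtain ⟨f, hf⟩ := hconj t ht
    have hnle : ¬ x ≤ t := fun hle => f.not_apply_lt_self t ((hlt x hx _ hf).trans_le hle)
    exact lt_of_le_not_ge ((hcmp x hx t ht).resolve_left hnle) hnle

lemma weaveEquiv_of_not_woven (G : Subgroup (Equiv.Perm P)) (hCT : C ⊆ T) (hC : C.Nonempty)
    (hconj : ∀ t ∈ T, ∃ f : P ≃o P, f t ∈ C) (hw : ¬ Woven X T) : WeaveEquiv G X C X T := by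
  obtain ⟨c, hc⟩ := hC
  have hwC : ¬ Woven X C := fun h => hw (h.mono_right hCT)
  refine ⟨⟨fun h => ?_, fun h => h.mono_right hCT⟩, ⟨fun h => ?_, fun h => h.mono_right hCT⟩,
    fun h => absurd h hwC, fun h => absurd h hw⟩
  · rcases incomp_or_forall_cmp_of_not_woven hw with hi | hcmp
    · exact Or.inl fun x hx _ _ => absurd (h.cmp hx hc) (hi x hx c (hCT hc))
    · exact madeBy_of_forall_cmp hconj hcmp h
  · rcases incomp_or_forall_cmp_of_not_woven hw with hi | hcmp
    · exact hi
    · exact fun x hx _ _ _ => h x hx c hc (hcmp x hx c (hCT hc))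

end Finite

section GroupAction

variable {G : Subgroup (Equiv.Perm P)} (hmono : ∀ σ ∈ G, ∀ a b : P, a ≤ b → σ a ≤ σ b)
  {A B A' B' A'' B'' : Set P}

def orderIsoOfMem {σ : Equiv.Perm P} (hσ : σ ∈ G) : P ≃o P :=
  σ.toOrderIso (hmono σ hσ) (hmono σ⁻¹ (inv_mem hσ))

include hmono in
lemma woven_smul_iff {σ : Equiv.Perm P} (hσ : σ ∈ G) : Woven (σ • A) (σ • B) ↔ Woven A B :=
  woven_image_iff (orderIsoOfMem hmono hσ)

namespace WeaveEquiv

lemma refl (G : Subgroup (Equiv.Perm P)) (A B : Set P) : WeaveEquiv G A B A B :=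
  ⟨Iff.rfl, Iff.rfl, fun _ => ⟨1, one_mem G, one_smul _ _, one_smul _ _⟩,
    fun _ => ⟨1, one_mem G, one_smul _ _, one_smul _ _⟩⟩

lemma symm (h : WeaveEquiv G A B A' B') : WeaveEquiv G A' B' A B :=
  ⟨h.1.symm, h.2.1.symm, h.2.2.2, h.2.2.1⟩

lemma swap (h : WeaveEquiv G A B A' B') : WeaveEquiv G B A B' A' := by
  obtain ⟨hm, hi, hw, hw'⟩ := h
  refine ⟨madeBy_comm.symm.trans (hm.trans madeBy_comm),
    incomp_comm.symm.trans (hi.trans incomp_comm), fun h => ?_, fun h => ?_⟩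
  · obtain ⟨Φ, hΦ, hA, hB⟩ := hw (woven_comm.1 h)
    exact ⟨Φ, hΦ, hB, hA⟩
  · obtain ⟨Φ, hΦ, hA, hB⟩ := hw' (woven_comm.1 h)
    exact ⟨Φ, hΦ, hB, hA⟩

include hmono in
lemma woven_iff (h : WeaveEquiv G A B A' B') : Woven A B ↔ Woven A' B' := by
  refine ⟨fun hw => ?_, fun hw => ?_⟩
  · obtain ⟨Φ, hΦ, rfl, rfl⟩ := h.2.2.1 hw
    exact (woven_smul_iff hmono hΦ).2 hw
  · obtain ⟨Φ, hΦ, rfl, rfl⟩ := h.2.2.2 hw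
    exact (woven_smul_iff hmono hΦ).2 hw

include hmono in
lemma trans (h : WeaveEquiv G A B A' B') (h' : WeaveEquiv G A' B' A'' B'') :
    WeaveEquiv G A B A'' B'' := by
  refine ⟨h.1.trans h'.1, h.2.1.trans h'.2.1, fun hw => ?_, fun hw => ?_⟩
  · obtain ⟨Φ, hΦ, hA, hB⟩ := h.2.2.1 hw
    obtain ⟨Ψ, hΨ, hA', hB'⟩ := h'.2.2.1 ((h.woven_iff hmono).1 hw)
    exact ⟨Ψ * Φ, mul_mem hΨ hΦ, by rw [mul_smul, hA, hA'], by rw [mul_smul, hB, hB']⟩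
  · obtain ⟨Ψ, hΨ, hA', hB'⟩ := h'.2.2.2 hw
    obtain ⟨Φ, hΦ, hA, hB⟩ := h.2.2.2 ((h'.woven_iff hmono).2 hw)
    exact ⟨Φ * Ψ, mul_mem hΦ hΨ, by rw [mul_smul, hA', hA], by rw [mul_smul, hB', hB]⟩

end WeaveEquiv

include hmono in
lemma weaveEquiv_smul {σ : Equiv.Perm P} (hσ : σ ∈ G) : WeaveEquiv G A B (σ • A) (σ • B) :=
  ⟨(madeBy_image_iff (orderIsoOfMem hmono hσ)).symm,
    (incomp_image_iff (orderIsoOfMem hmono hσ)).symm,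
    fun _ => ⟨σ, hσ, rfl, rfl⟩,
    fun _ => ⟨σ⁻¹, inv_mem hσ, inv_smul_smul σ A, inv_smul_smul σ B⟩⟩

end GroupAction

lemma exists_mem_apply_eq {α : Type*} {G : Subgroup (Equiv.Perm α)} {e x y : α}
    (hx : ∃ σ ∈ G, σ e = x) (hy : ∃ σ ∈ G, σ e = y) : ∃ σ ∈ G, σ x = y := by
  obtain ⟨σ, hσ, rfl⟩ := hx
  obtain ⟨τ, hτ, rfl⟩ := hy
  exact ⟨τ * σ⁻¹, mul_mem hτ (inv_mem hσ), by simp⟩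

section Control

variable {G : Subgroup (Equiv.Perm P)} {S B C T : Set P}

lemma not_controlsVia_iff : ¬ ControlsVia G C B S ↔
    ∀ S₁ ∈ blocksIn G S B, ∀ S₂ ∈ blocksIn G S B, WeaveEquiv G S₁ C S₂ C := by
  simp only [ControlsVia, not_exists, not_and, not_not]
  rfl

lemma ControlsVia.nonempty (h : ControlsVia G C B S) : C.Nonempty := by
  rw [Set.nonempty_iff_ne_empty]
  rintro rfl
  refine not_controlsVia_iff.2 (fun S₁ _ S₂ _ => ?_) h
  have hwoven : ∀ X : Set P, ¬ Woven X ∅ := fun _ ⟨⟨_, _, _, hb, _⟩, _⟩ => hb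
  exact ⟨iff_of_true (Or.inl fun _ _ _ hb => hb.elim) (Or.inl fun _ _ _ hb => hb.elim),
    iff_of_true (fun _ _ _ hb => hb.elim) (fun _ _ _ hb => hb.elim),
    fun h => absurd h (hwoven _), fun h => absurd h (hwoven _)⟩

lemma weaveEquiv_of_not_controlsVia [Finite P]
    (hmono : ∀ σ ∈ G, ∀ a b : P, a ≤ b → σ a ≤ σ b) (hSB : S ⊆ B) (hCT : C ⊆ T)
    (hC : C.Nonempty) (hconj : ∀ t ∈ T, ∃ σ ∈ G, σ t ∈ C)
    (hT : ¬ ControlsVia G T B S) (hS : ¬ ControlsVia G S T C) {Y : Set P}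
    (hY : Y ∈ blocksIn G S B) : WeaveEquiv G S C Y C := by
  rw [not_controlsVia_iff] at hT hS
  have hST := hT S ⟨⟨1, one_mem G, one_smul _ _⟩, hSB⟩ Y hY
  by_cases hw : Woven S T
  · obtain ⟨Φ, hΦ, hΦS, hΦT⟩ := hST.2.2.1 hw
    have hC' : Φ⁻¹ • C ∈ blocksIn G C T := ⟨⟨Φ⁻¹, inv_mem hΦ, rfl⟩, by
      rw [← inv_smul_eq_iff.2 hΦT.symm]
      exact Set.smul_set_mono hCT⟩
    have h := (hS C ⟨⟨1, one_mem G, one_smul _ _⟩, hCT⟩ _ hC').swap.trans hmono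
      (weaveEquiv_smul hmono hΦ)
    rwa [hΦS, smul_inv_smul] at h
  · have hconj' : ∀ t ∈ T, ∃ f : P ≃o P, f t ∈ C := fun t ht => by
      obtain ⟨σ, hσ, h⟩ := hconj t ht
      exact ⟨orderIsoOfMem hmono hσ, h⟩
    have hwY : ¬ Woven Y T := mt (hST.woven_iff hmono).2 hw
    exact ((weaveEquiv_of_not_woven G hCT hC hconj' hw).trans hmono hST).trans hmono
      (weaveEquiv_of_not_woven G hCT hC hconj' hwY).symm

end Control

theorem control_mutual_or_from_above_general [Fintype P]
    (G : Subgroup (Equiv.Perm P))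
    (hmono : ∀ σ ∈ G, ∀ a b : P, a ≤ b → σ a ≤ σ b)
    (e : P)
    (E : Set P) (hE : E = {y | ∃ σ ∈ G, σ e = y})
    (S B : Set P) (hSB : S ⊆ B)
    (C T : Set P) (hCT : C ⊆ T) (hTE : T ⊆ E)
    (hcontrol : ControlsVia G C B S) :
    ControlsVia G T B S ∨ ControlsVia G S T C := by
  by_contra h
  obtain ⟨hT, hS⟩ := not_or.1 h
  obtain ⟨c, hc⟩ := hcontrol.nonempty
  have hconj : ∀ t ∈ T, ∃ σ ∈ G, σ t ∈ C := fun t ht => by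
    subst hE
    obtain ⟨σ, hσ, hσt⟩ := exists_mem_apply_eq (hTE ht) (hTE (hCT hc))
    exact ⟨σ, hσ, hσt ▸ hc⟩
  have hsame {Y : Set P} (hY : Y ∈ blocksIn G S B) : WeaveEquiv G S C Y C :=
    weaveEquiv_of_not_controlsVia hmono hSB hCT ⟨c, hc⟩ hconj hT hS hY
  obtain ⟨S₁, hS₁, S₂, hS₂, hne⟩ := hcontrol
  exact hne ((hsame hS₁).symm.trans hmono (hsame hS₂))

/-- Lemma `mutualoruppercontrol`: if `(S,B)` is a primitive pair on the orbit
`D`, `C` is a block on the orbit `E` with `C ▶^B S`, and `(C,T)` is a primitive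
pair, then `T ▶^B S` or `S ▶^T C`. -/
theorem control_mutual_or_from_above [Fintype P]
    (G : Subgroup (Equiv.Perm P))
    (hmono : ∀ σ ∈ G, ∀ a b : P, a ≤ b → σ a ≤ σ b)
    (d e : P)
    (D : Set P) (hD : D = {y | ∃ σ ∈ G, σ d = y})
    (E : Set P) (hE : E = {y | ∃ σ ∈ G, σ e = y})
    (S B : Set P) (hSB : S ⊆ B) (hBD : B ⊆ D)
    (hblockS : ∀ σ ∈ G, σ • S = S ∨ (σ • S) ∩ S = ∅)
    (hblockB : ∀ σ ∈ G, σ • B = B ∨ (σ • B) ∩ B = ∅)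
    (hprimSB : PrimitivePair G S B)
    (C T : Set P) (hCT : C ⊆ T) (hTE : T ⊆ E)
    (hblockC : ∀ σ ∈ G, σ • C = C ∨ (σ • C) ∩ C = ∅)
    (hblockT : ∀ σ ∈ G, σ • T = T ∨ (σ • T) ∩ T = ∅)
    (hprimCT : PrimitivePair G C T)
    (hcontrol : ControlsVia G C B S) :
    ControlsVia G T B S ∨ ControlsVia G S T C :=
  control_mutual_or_from_above_general G hmono e E hE S B hSB C T hCT hTE hcontrol
end

section
/- Fix M ≥ 3 and define the ordered set U on 4M points x_j^i (i ∈ {1,2,3,4}, j ∈ {1,…,M}) with order generated by: x_j^1 < x_k^2 iff j ≠ k; x_j^3 < x_k^2 iff j = k; x_j^3 < x_k^4 iff j = k; x_j^1 < x_k^4 iff j = k; and no further comparabilities. Then every order-preserving self-map f of U that maps each of the four levels D_i = {x_1^i,…,x_M^i} into itself is an automorphism of U. -/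
/-- Example `noDendos`: let `M ≥ 3` and let `U` be the ordered set on the `4M`
points `x_j^i` (`i ∈ {1,2,3,4}`, here indexed by `Fin 4`, `j ∈ Fin M`) whose
strict order is exactly: `x_j^1 < x_k^2` iff `j ≠ k`; `x_j^3 < x_k^2` iff
`j = k`; `x_j^3 < x_k^4` iff `j = k`; `x_j^1 < x_k^4` iff `j = k`; and no
further strict comparabilities.  Then every order-preserving self-map `f` of
`U` that maps each level `D_i = {x_j^i : j}` into itself is an automorphism
of `U`. -/
theorem endo_fixing_levels_is_auto {M : ℕ} (hM : 3 ≤ M)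
    {U : Type*} [PartialOrder U] [Fintype U]
    (x : Fin 4 → Fin M → U)
    (hbij : Function.Bijective (fun p : Fin 4 × Fin M => x p.1 p.2))
    (horder : ∀ (i k : Fin 4) (j l : Fin M),
      x i j < x k l ↔
        ((i = 0 ∧ k = 1 ∧ j ≠ l) ∨ (i = 2 ∧ k = 1 ∧ j = l) ∨
         (i = 2 ∧ k = 3 ∧ j = l) ∨ (i = 0 ∧ k = 3 ∧ j = l)))
    (f : U → U) (hf : Monotone f)
    (hlevels : ∀ (i : Fin 4) (j : Fin M), ∃ l : Fin M, f (x i j) = x i l) :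
    ∃ e : U ≃o U, ∀ u, e u = f u := by
  classical
  choose g hg using hlevels
  have hx : ∀ i i' j j', x i j = x i' j' → i = i' ∧ j = j' := by
    intro i i' j j' h
    have := hbij.injective (a₁ := (i, j)) (a₂ := (i', j')) h
    exact ⟨congrArg Prod.fst this, congrArg Prod.snd this⟩
  have hlt : ∀ i k j l, x i j < x k l → x i (g i j) < x k (g k l) := by
    intro i k j l h
    have h2 : f (x i j) ≤ f (x k l) := hf h.le
    rw [hg, hg] at h2
    rcases lt_or_eq_of_le h2 with h3 | h3
    · exact h3
    · exfalso
      have hik := (hx _ _ _ _ h3).1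
      rcases (horder i k j l).1 h with ⟨hi, hk, _⟩ | ⟨hi, hk, _⟩ | ⟨hi, hk, _⟩ | ⟨hi, hk, _⟩ <;>
        (rw [hi, hk] at hik; exact absurd hik (by decide))
  have h21 : ∀ j : Fin M, g 2 j = g 1 j := by
    intro j
    have h0 : x 2 j < x 1 j := (horder 2 1 j j).2 (Or.inr (Or.inl ⟨rfl, rfl, rfl⟩))
    rcases (horder 2 1 (g 2 j) (g 1 j)).1 (hlt 2 1 j j h0) with
      ⟨h1, _, _⟩ | ⟨_, _, h3⟩ | ⟨_, h2, _⟩ | ⟨h1, _, _⟩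
    · exact absurd h1 (by decide)
    · exact h3
    · exact absurd h2 (by decide)
    · exact absurd h1 (by decide)
  have h23 : ∀ j : Fin M, g 2 j = g 3 j := by
    intro j
    have h0 : x 2 j < x 3 j := (horder 2 3 j j).2 (Or.inr (Or.inr (Or.inl ⟨rfl, rfl, rfl⟩)))
    rcases (horder 2 3 (g 2 j) (g 3 j)).1 (hlt 2 3 j j h0) with
      ⟨h1, _, _⟩ | ⟨_, h2, _⟩ | ⟨_, _, h3⟩ | ⟨h1, _, _⟩
    · exact absurd h1 (by decide)
    · exact absurd h2 (by decide)
    · exact h3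
    · exact absurd h1 (by decide)
  have h03 : ∀ j : Fin M, g 0 j = g 3 j := by
    intro j
    have h0 : x 0 j < x 3 j := (horder 0 3 j j).2 (Or.inr (Or.inr (Or.inr ⟨rfl, rfl, rfl⟩)))
    rcases (horder 0 3 (g 0 j) (g 3 j)).1 (hlt 0 3 j j h0) with
      ⟨_, h1, _⟩ | ⟨h2, _, _⟩ | ⟨h2, _, _⟩ | ⟨_, _, h3⟩
    · exact absurd h1 (by decide)
    · exact absurd h2 (by decide)
    · exact absurd h2 (by decide)
    · exact h3
  have hgeq : ∀ i j, g i j = g 0 j := by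
    intro i j
    fin_cases i
    · rfl
    · exact (h21 j).symm.trans ((h23 j).trans (h03 j).symm)
    · exact (h23 j).trans (h03 j).symm
    · exact (h03 j).symm
  have hf' : ∀ i j, f (x i j) = x i (g 0 j) := by
    intro i j; rw [hg, hgeq]
  have ginj : Function.Injective (g 0) := by
    intro j l h
    by_contra hne
    have h0 : x 0 j < x 1 l := (horder 0 1 j l).2 (Or.inl ⟨rfl, rfl, hne⟩)
    have h1 := hlt 0 1 j l h0
    rw [hgeq 1 l] at h1
    rcases (horder 0 1 (g 0 j) (g 0 l)).1 h1 with
      ⟨_, _, h2⟩ | ⟨h2, _, _⟩ | ⟨_, h2, _⟩ | ⟨_, h2, _⟩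
    · exact h2 h
    · exact absurd h2 (by decide)
    · exact absurd h2 (by decide)
    · exact absurd h2 (by decide)
  have hgiff : ∀ j l : Fin M, g 0 j = g 0 l ↔ j = l :=
    fun j l => ⟨fun h => ginj h, fun h => by rw [h]⟩
  have finj : Function.Injective f := by
    intro a b h
    obtain ⟨⟨i, j⟩, rfl⟩ := hbij.surjective a
    obtain ⟨⟨k, l⟩, rfl⟩ := hbij.surjective b
    simp only at h ⊢
    rw [hf', hf'] at h
    obtain ⟨hik, hjl⟩ := hx _ _ _ _ h
    rw [hik, ginj hjl]
  have fbij : Function.Bijective f := Finite.injective_iff_bijective.mp finj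
  have hltiff : ∀ (i k : Fin 4) (j l : Fin M), f (x i j) < f (x k l) ↔ x i j < x k l := by
    intro i k j l
    rw [hf', hf', horder, horder]
    simp only [ne_eq, hgiff]
  have hle : ∀ a b, f a ≤ f b ↔ a ≤ b := by
    intro a b
    obtain ⟨⟨i, j⟩, rfl⟩ := hbij.surjective a
    obtain ⟨⟨k, l⟩, rfl⟩ := hbij.surjective b
    simp only
    constructor
    · intro h
      rcases lt_or_eq_of_le h with h | h
      · exact ((hltiff i k j l).1 h).le
      · exact (finj h).le
    · intro h
      exact hf h
  exact ⟨{ toEquiv := Equiv.ofBijective f fbij, map_rel_iff' := fun {a b} => hle a b },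
    fun u => rfl⟩
end
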